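/- Let F have characteristic 0, J = J_m(0), and D = diag(α, α−1, ..., α−(m−1)). If f ∈ F[X] has zero constant term, degree < m, and (I + f(J)) commutes with D + g(J) for some polynomial g with no constant term, then f = 0. In other words, the stabilizer in G of any element D + g(J) is trivial. -/

import Mathlib

/-!
Since `f(J)` commutes with `g(J)`, the commutation of `I + f(J)` with `D + g(J)` reduces to
`f(J) D = D f(J)`. The `(i, j)` entry of `f(J)` is `f_{j-i}`, and the `(i, j)` entry of the
commutator `f(J) D - D f(J)` is `f_{j-i} (d_j - d_i)`; on the first row this is `-n f_n`, so every
coefficient `f_n` with `0 < n < m` vanishes in characteristic zero.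
-/

/-- The m×m upper triangular Jordan block with eigenvalue α. -/
def jordanBlock {F : Type*} [Field F] (m : ℕ) (α : F) :
    Matrix (Fin m) (Fin m) F :=
  fun i j => if (i : ℕ) + 1 = (j : ℕ) then 1 else if i = j then α else 0

open Polynomial

lemma commute_of_commute_one_add_add {R : Type*} [Ring R] {a b d : R} (hab : Commute a b)
    (h : Commute (1 + a) (d + b)) : Commute a d := by
  have had : Commute a (d + b) := by
    simpa using h.sub_left (Commute.one_left (d + b))
  simpa using had.sub_right hab

section JordanBlock

variable {F : Type*} [Field F] {m : ℕ}

lemma jordanBlock_zero_apply (i j : Fin m) :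
    jordanBlock m (0 : F) i j = if (i : ℕ) + 1 = j then 1 else 0 := by
  unfold jordanBlock
  split_ifs <;> simp

lemma jordanBlock_zero_pow_apply (n : ℕ) (i j : Fin m) :
    (jordanBlock m (0 : F) ^ n) i j = if (i : ℕ) + n = j then 1 else 0 := by
  induction n generalizing j with
  | zero => simp [Matrix.one_apply, Fin.ext_iff]
  | succ n ih =>
    rw [pow_succ, Matrix.mul_apply]
    simp only [ih, jordanBlock_zero_apply, ite_mul, one_mul, zero_mul]
    by_cases h : (i : ℕ) + n < m
    · rw [Finset.sum_eq_single ⟨(i : ℕ) + n, h⟩]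
      · simp [← add_assoc]
      · intro k _ hk
        rw [if_neg fun hk' => hk (Fin.ext hk'.symm)]
      · simp
    · rw [Finset.sum_eq_zero, if_neg (by omega)]
      intro k _
      rw [if_neg (by omega)]

lemma aeval_jordanBlock_zero_apply (f : F[X]) {i j : Fin m} (hij : (i : ℕ) ≤ j) :
    aeval (jordanBlock m (0 : F)) f i j = f.coeff (j - i) := by
  rw [aeval_eq_sum_range, Matrix.sum_apply]
  simp only [Matrix.smul_apply, jordanBlock_zero_pow_apply, smul_eq_mul, mul_ite, mul_one,
    mul_zero]
  rw [Finset.sum_eq_single ((j : ℕ) - i), if_pos (by omega)]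
  · intro n _ hn
    rw [if_neg (by omega)]
  · intro hn
    rw [if_pos (by omega), coeff_eq_zero_of_natDegree_lt (by simp at hn; omega)]

lemma coeff_eq_zero_of_commute_aeval_jordanBlock_diagonal {f : F[X]} {d : Fin m → F}
    (h : Commute (aeval (jordanBlock m (0 : F)) f) (Matrix.diagonal d)) {i j : Fin m}
    (hij : (i : ℕ) ≤ j) (hd : d i ≠ d j) : f.coeff (j - i) = 0 := by
  have hentry := congrFun (congrFun h.eq i) j
  rw [Matrix.mul_diagonal, Matrix.diagonal_mul, aeval_jordanBlock_zero_apply f hij] at hentry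
  have : f.coeff (j - i) * (d j - d i) = 0 := by linear_combination hentry
  exact (mul_eq_zero.mp this).resolve_right (sub_ne_zero.mpr hd.symm)

end JordanBlock

theorem stmt10_general {F : Type*} [Field F] [CharZero F] {m : ℕ} (α : F)
    (f g : Polynomial F) (hf0 : f.coeff 0 = 0) (hfdeg : f.degree < m)
    (hcomm :
      letI J : Matrix (Fin m) (Fin m) F := jordanBlock m 0
      letI D : Matrix (Fin m) (Fin m) F :=
        Matrix.diagonal (fun i : Fin m => α - (i : ℕ))
      (1 + Polynomial.aeval J f) * (D + Polynomial.aeval J g) =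
        (D + Polynomial.aeval J g) * (1 + Polynomial.aeval J f)) :
    f = 0 := by
  have hfD : Commute (aeval (jordanBlock m (0 : F)) f)
      (Matrix.diagonal fun i : Fin m => α - (i : ℕ)) :=
    commute_of_commute_one_add_add ((Commute.all f g).map _) hcomm
  ext n
  rw [coeff_zero]
  rcases Nat.eq_zero_or_pos n with rfl | hn
  · exact hf0
  by_cases hnm : n < m
  · simpa using coeff_eq_zero_of_commute_aeval_jordanBlock_diagonal hfD
      (i := ⟨0, hn.trans hnm⟩) (j := ⟨n, hnm⟩) (Nat.zero_le n)
      (by simpa [eq_comm (a := α)] using hn.ne')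
  · exact coeff_eq_zero_of_degree_lt (hfdeg.trans_le (by exact_mod_cast not_lt.mp hnm))

theorem stmt10 {F : Type*} [Field F] [CharZero F] {m : ℕ} (hm : 1 ≤ m) (α : F)
    (f g : Polynomial F) (hf0 : f.coeff 0 = 0) (hfdeg : f.degree < m)
    (hg0 : g.coeff 0 = 0)
    (hcomm :
      letI J : Matrix (Fin m) (Fin m) F := jordanBlock m 0
      letI D : Matrix (Fin m) (Fin m) F :=
        Matrix.diagonal (fun i : Fin m => α - (i : ℕ))
      (1 + Polynomial.aeval J f) * (D + Polynomial.aeval J g) =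
        (D + Polynomial.aeval J g) * (1 + Polynomial.aeval J f)) :
    f = 0 :=
  stmt10_general α f g hf0 hfdeg hcomm
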